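/- arXiv:2211.08418 — 10 statements merged into one kernel-verified Lean document; each statement's English description precedes it below -/
import Mathlib

section
/- Let c : [0,∞) → ℝ be continuous, bounded, and positive, and let y be a positive solution of y'' = c·y that decreases to a limit y_∞ > 0. Then ∫₀^∞ t·c(t) dt < ∞. -/
open Real Set Filter MeasureTheory Topology

theorem stmt2 (c y y' : ℝ → ℝ) (M L : ℝ)
    (hc : ContinuousOn c (Ici 0))
    (hcpos : ∀ t ∈ Ici (0:ℝ), 0 < c t)
    (hbdd : ∀ t ∈ Ici (0:ℝ), c t ≤ M)
    (hy : ∀ t ∈ Ici (0:ℝ), HasDerivAt y (y' t) t)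
    (hy' : ∀ t ∈ Ici (0:ℝ), HasDerivAt y' (c t * y t) t)
    (hypos : ∀ t ∈ Ici (0:ℝ), 0 < y t)
    (hmono : AntitoneOn y (Ici 0))
    (hL : 0 < L)
    (hlim : Tendsto y atTop (nhds L)) :
    IntegrableOn (fun t => t * c t) (Ici 0) := by
  have hycont : ContinuousOn y (Ici 0) := fun t ht => (hy t ht).continuousAt.continuousWithinAt
  have hy'cont : ContinuousOn y' (Ici 0) := fun t ht => (hy' t ht).continuousAt.continuousWithinAt
  -- L ≤ y t for all t ≥ 0
  have hyL : ∀ t ∈ Ici (0:ℝ), L ≤ y t := by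
    intro t ht
    refine le_of_tendsto hlim ?_
    filter_upwards [eventually_ge_atTop t] with s hs
    exact hmono ht (le_trans ht hs) hs
  -- y' ≤ 0 on Ici 0
  have hy'nonpos : ∀ t ∈ Ici (0:ℝ), y' t ≤ 0 := by
    intro t ht
    have h1 : HasDerivWithinAt y (y' t) (Ioi t) t := (hy t ht).hasDerivWithinAt
    have h2 : Tendsto (slope y t) (𝓝[Ioi t \ {t}] t) (𝓝 (y' t)) :=
      (hasDerivWithinAt_iff_tendsto_slope).mp h1
    have hsub : Ioi t \ {t} = Ioi t := by
      ext x; simp only [mem_diff, mem_Ioi, mem_singleton_iff]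
      exact ⟨fun h => h.1, fun h => ⟨h, ne_of_gt h⟩⟩
    rw [hsub] at h2
    refine le_of_tendsto h2 ?_
    filter_upwards [self_mem_nhdsWithin] with s hs
    have hs' : t < s := hs
    have hys : y s ≤ y t := hmono ht (le_trans ht hs'.le) hs'.le
    have : slope y t s = (y s - y t) / (s - t) := by
      simp [slope, div_eq_inv_mul]
    rw [this]
    exact div_nonpos_of_nonpos_of_nonneg (by linarith) (by linarith)
  -- key interval bound
  have key : ∀ T : ℝ, 0 ≤ T → (∫ x in (0:ℝ)..T, x * c x) ≤ y 0 / L := by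
    intro T hT
    have huIcc : uIcc (0:ℝ) T = Icc 0 T := uIcc_of_le hT
    have hsub : Icc (0:ℝ) T ⊆ Ici 0 := fun x hx => hx.1
    have hcont2 : ContinuousOn (fun x => x * (c x * y x)) (Icc 0 T) :=
      continuousOn_id.mul (((hc.mono hsub).mul (hycont.mono hsub)))
    have hint2 : IntervalIntegrable (fun x => x * (c x * y x)) volume 0 T :=
      (hcont2.intervalIntegrable_of_Icc hT)
    have hint1 : IntervalIntegrable (fun _ : ℝ => (1:ℝ)) volume 0 T :=
      intervalIntegrable_const
    have hintc : IntervalIntegrable (fun x => x * c x) volume 0 T :=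
      (continuousOn_id.mul (hc.mono hsub)).intervalIntegrable_of_Icc hT
    -- integration by parts: ∫ x * (c x * y x) = T * y' T - 0 - ∫ 1 * y' x
    have hIBP : (∫ x in (0:ℝ)..T, x * (c x * y x))
        = T * y' T - 0 * y' 0 - ∫ x in (0:ℝ)..T, 1 * y' x := by
      refine intervalIntegral.integral_mul_deriv_eq_deriv_mul
        (u := fun x => x) (u' := fun _ => 1) (v := y') (v' := fun x => c x * y x)
        (fun x _ => hasDerivAt_id x) ?_ hint1 ?_
      · intro x hx
        exact hy' x (hsub (huIcc ▸ hx))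
      · exact (((hc.mono hsub).mul (hycont.mono hsub))).intervalIntegrable_of_Icc hT
    have hFTC : (∫ x in (0:ℝ)..T, y' x) = y T - y 0 := by
      refine intervalIntegral.integral_eq_sub_of_hasDerivAt ?_
        ((hy'cont.mono hsub).intervalIntegrable_of_Icc hT)
      intro x hx
      exact hy x (hsub (huIcc ▸ hx))
    have hA : (∫ x in (0:ℝ)..T, x * (c x * y x)) ≤ y 0 := by
      rw [hIBP]
      simp only [one_mul, zero_mul, sub_zero]
      rw [hFTC]
      have h1 : T * y' T ≤ 0 := mul_nonpos_of_nonneg_of_nonpos hT (hy'nonpos T hT)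
      have h2 : L ≤ y T := hyL T hT
      linarith
    have hmonoInt : L * (∫ x in (0:ℝ)..T, x * c x) ≤ ∫ x in (0:ℝ)..T, x * (c x * y x) := by
      rw [← intervalIntegral.integral_const_mul]
      refine intervalIntegral.integral_mono_on hT (hintc.const_mul L) hint2 ?_
      intro x hx
      have hx0 : (0:ℝ) ≤ x := hx.1
      have hxI : x ∈ Ici (0:ℝ) := hx0
      have := hyL x hxI
      have hc0 : 0 < c x := hcpos x hxI
      calc L * (x * c x) = x * c x * L := by ring
        _ ≤ x * c x * y x := by
            exact mul_le_mul_of_nonneg_left this (mul_nonneg hx0 hc0.le)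
        _ = x * (c x * y x) := by ring
    have : (∫ x in (0:ℝ)..T, x * c x) ≤ y 0 / L := by
      rw [le_div_iff₀ hL]
      calc (∫ x in (0:ℝ)..T, x * c x) * L = L * ∫ x in (0:ℝ)..T, x * c x := by ring
        _ ≤ ∫ x in (0:ℝ)..T, x * (c x * y x) := hmonoInt
        _ ≤ y 0 := hA
    exact this
  -- integrability on each Ioc 0 T
  have hfi : ∀ T : ℝ, IntegrableOn (fun t => t * c t) (Ioc 0 T) := by
    intro T
    rcases le_or_gt T 0 with h | h
    · rw [Ioc_eq_empty (by exact not_lt.mpr h)]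
      exact integrableOn_empty
    · have hsub : Icc (0:ℝ) T ⊆ Ici 0 := fun x hx => hx.1
      have : IntegrableOn (fun t => t * c t) (Icc 0 T) :=
        ((continuousOn_id.mul (hc.mono hsub)).integrableOn_compact isCompact_Icc)
      exact this.mono_set Ioc_subset_Icc_self
  have hIoi : IntegrableOn (fun t => t * c t) (Ioi 0) := by
    refine integrableOn_Ioi_of_intervalIntegral_norm_bounded (y 0 / L) 0 hfi
      (tendsto_id (α := ℝ)) ?_
    filter_upwards [eventually_ge_atTop (0:ℝ)] with T hT
    have : (∫ x in (0:ℝ)..T, ‖x * c x‖) = ∫ x in (0:ℝ)..T, x * c x := by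
      refine intervalIntegral.integral_congr ?_
      intro x hx
      rw [uIcc_of_le hT] at hx
      exact abs_of_nonneg (mul_nonneg hx.1 (hcpos x hx.1).le)
    rw [this]
    exact key T hT
  rwa [integrableOn_Ici_iff_integrableOn_Ioi]
end

section
/- Let v : [0,∞) → ℝ be differentiable with v(t) ≤ 0 for all t, v integrable on [0,∞), v(t) → 0 as t → ∞, and v'(t) ≥ −v(t)² for all t. Then there exists M ≥ 0 such that |v(t)| ≤ M/t for all t > 0. -/
/-!
Put `g t = 1 - t v(t) ≥ 1`. The inequality `v' ≥ -v²` gives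
`(log g)' = (-v - t v') / (1 - t v) ≤ -v = |v|`, so `log g(t) ≤ ∫₀^∞ |v| =: I` and
`t |v(t)| = g(t) - 1 ≤ exp I - 1`.
-/

open Real Set Filter MeasureTheory Topology

lemma div_one_sub_mul_le_neg {t a b : ℝ} (ht : 0 ≤ t) (ha : a ≤ 0) (hb : -a ^ 2 ≤ b) :
    (-a - t * b) / (1 - t * a) ≤ -a := by
  rw [div_le_iff₀ (by nlinarith)]
  nlinarith [mul_le_mul_of_nonneg_left hb ht]

section

variable {v v' : ℝ → ℝ} (hd : ∀ t ∈ Ici (0:ℝ), HasDerivAt v (v' t) t)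
  (hnp : ∀ t ∈ Ici (0:ℝ), v t ≤ 0)

include hnp in
lemma one_le_one_sub_mul_of_nonpos {t : ℝ} (ht : 0 ≤ t) : 1 ≤ 1 - t * v t := by
  nlinarith [hnp t ht]

include hd hnp in
lemma hasDerivAt_log_one_sub_mul {t : ℝ} (ht : 0 ≤ t) :
    HasDerivAt (fun s => log (1 - s * v s)) ((-v t - t * v' t) / (1 - t * v t)) t := by
  have hg : HasDerivAt (fun s => 1 - s * v s) (-(1 * v t + t * v' t)) t :=
    ((hasDerivAt_id t).mul (hd t ht)).const_sub 1
  convert hg.log (by linarith [one_le_one_sub_mul_of_nonpos hnp ht]) using 2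
  ring

include hd hnp in
lemma log_one_sub_mul_le_integral (hineq : ∀ t ∈ Ici (0:ℝ), -(v t) ^ 2 ≤ v' t)
    {t : ℝ} (ht : 0 ≤ t) : log (1 - t * v t) ≤ ∫ s in (0:ℝ)..t, |v s| := by
  have hcont : ContinuousOn v (Icc 0 t) := fun s hs =>
    (hd s hs.1).continuousAt.continuousWithinAt
  have key := intervalIntegral.sub_le_integral_of_hasDeriv_right_of_le_Ico ht
    (g := fun s => log (1 - s * v s))
    (fun s hs => (hasDerivAt_log_one_sub_mul hd hnp hs.1).continuousAt.continuousWithinAt)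
    (fun s hs => (hasDerivAt_log_one_sub_mul hd hnp hs.1).hasDerivWithinAt)
    hcont.abs.integrableOn_Icc
    (fun s hs => by
      rw [abs_of_nonpos (hnp s hs.1)]
      exact div_one_sub_mul_le_neg hs.1 (hnp s hs.1) (hineq s hs.1))
  simpa using key

end

theorem stmt3_general (v v' : ℝ → ℝ)
    (hd : ∀ t ∈ Ici (0:ℝ), HasDerivAt v (v' t) t)
    (hnp : ∀ t ∈ Ici (0:ℝ), v t ≤ 0)
    (hint : IntegrableOn (fun t => |v t|) (Ici 0))
    (hineq : ∀ t ∈ Ici (0:ℝ), -(v t)^2 ≤ v' t) :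
    ∃ M ≥ (0:ℝ), ∀ t > (0:ℝ), |v t| ≤ M / t := by
  set I := ∫ s in Ici (0:ℝ), |v s|
  have hI : 0 ≤ I := setIntegral_nonneg measurableSet_Ici fun s _ => abs_nonneg _
  refine ⟨exp I - 1, by linarith [add_one_le_exp I], fun t ht => ?_⟩
  have hpartial : ∫ s in (0:ℝ)..t, |v s| ≤ I := by
    rw [intervalIntegral.integral_of_le ht.le]
    exact setIntegral_mono_set hint (.of_forall fun _ => abs_nonneg _)
      (Ioc_subset_Ioi_self.trans Ioi_subset_Ici_self).eventuallyLE
  have hlog := (log_one_sub_mul_le_integral hd hnp hineq ht.le).trans hpartial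
  have hg := one_le_one_sub_mul_of_nonpos hnp ht.le
  rw [log_le_iff_le_exp (by linarith)] at hlog
  rw [abs_of_nonpos (hnp t ht.le), le_div_iff₀ ht]
  linarith

theorem stmt3 (v v' : ℝ → ℝ)
    (hd : ∀ t ∈ Ici (0:ℝ), HasDerivAt v (v' t) t)
    (hnp : ∀ t ∈ Ici (0:ℝ), v t ≤ 0)
    (hint : IntegrableOn (fun t => |v t|) (Ici 0))
    (hlim : Tendsto v atTop (nhds 0))
    (hineq : ∀ t ∈ Ici (0:ℝ), -(v t)^2 ≤ v' t) :
    ∃ M ≥ (0:ℝ), ∀ t > (0:ℝ), |v t| ≤ M / t :=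
  stmt3_general v v' hd hnp hint hineq
end

section
/- Fix constants c₀ < 1 and C₀ > 1 and a time T. Let c : [T,∞) → ℝ satisfy c(t) ≥ c₀ − C₀(t − T) for t ≥ T, and let f : [T,∞) → ℝ be differentiable with f'(t) = f(t)² − c(t). If f(T) ≤ c₀²/(1000·C₀), then there exists t ∈ [T, T + c₀/(2C₀)] with f(t) < 0. -/
open Real Set Filter Topology

theorem stmt4 (c₀ C₀ T : ℝ) (hc₀pos : 0 < c₀) (hc₀ : c₀ < 1) (hC₀ : 1 < C₀)
    (c f : ℝ → ℝ)
    (hc : ∀ t ≥ T, c₀ - C₀ * (t - T) ≤ c t)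
    (hf : ∀ t ≥ T, HasDerivAt f (f t ^ 2 - c t) t)
    (hfT : f T ≤ c₀ ^ 2 / (1000 * C₀)) :
    ∃ t ∈ Icc T (T + c₀ / (2 * C₀)), f t < 0 := by
  by_contra hcon
  push_neg at hcon
  have hC₀pos : (0:ℝ) < C₀ := lt_trans one_pos hC₀
  set T' := T + c₀ / (2 * C₀) with hT'def
  have hdpos : 0 < c₀ / (2 * C₀) := by positivity
  have hTT' : T < T' := by simp [hT'def]; linarith
  have hfT' : f T ≤ c₀ ^ 2 / (1000 * C₀) := hfT
  have hMlt : c₀ ^ 2 / (1000 * C₀) < c₀ / 2 := by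
    rw [div_lt_div_iff₀ (by positivity) (by norm_num)]
    nlinarith
  -- lower bound on c on the interval
  have hcI : ∀ t ∈ Icc T T', c₀ / 2 ≤ c t := by
    intro t ht
    have h1 := hc t ht.1
    have h2 : t - T ≤ c₀ / (2 * C₀) := by
      have := ht.2; simp only [hT'def] at this; linarith
    have h3 : C₀ * (t - T) ≤ C₀ * (c₀ / (2 * C₀)) :=
      mul_le_mul_of_nonneg_left h2 hC₀pos.le
    have h4 : C₀ * (c₀ / (2 * C₀)) = c₀ / 2 := by
      field_simp
    linarith
  -- Claim A : f ≤ c₀/2 on the interval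
  have hK : ∀ t ∈ Icc T T', f t ≤ c₀ / 2 := by
    by_contra hA
    push_neg at hA
    obtain ⟨t₁, ht₁, hft₁⟩ := hA
    have hcontf : ContinuousOn f (Icc T t₁) := fun x hx =>
      ((hf x hx.1).continuousAt).continuousWithinAt
    set S := Icc T t₁ ∩ f ⁻¹' (Ici (c₀ / 2)) with hSdef
    have hScl : IsClosed S :=
      hcontf.preimage_isClosed_of_isClosed isClosed_Icc isClosed_Ici
    have hSne : S.Nonempty := ⟨t₁, ⟨ht₁.1, le_refl _⟩, hft₁.le⟩
    have hSbd : BddBelow S := ⟨T, fun x hx => hx.1.1⟩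
    set u := sInf S with hudef
    have huS : u ∈ S := hScl.csInf_mem hSne hSbd
    have huIcc : u ∈ Icc T t₁ := huS.1
    have hfu : c₀ / 2 ≤ f u := huS.2
    have hTu : T < u := by
      rcases lt_or_eq_of_le huIcc.1 with h | h
      · exact h
      · exfalso; rw [← h] at hfu; linarith
    have hlt : ∀ t ∈ Ico T u, f t < c₀ / 2 := by
      intro t ht
      by_contra hle
      push_neg at hle
      have htS : t ∈ S := ⟨⟨ht.1, le_trans ht.2.le huIcc.2⟩, hle⟩
      have := csInf_le hSbd htS
      exact absurd this (not_le.mpr ht.2)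
    -- f u ≤ c₀/2 by continuity from the left
    haveI : (𝓝[Ioo T u] u).NeBot := right_nhdsWithin_Ioo_neBot hTu
    have hfuc : Tendsto f (𝓝[Ioo T u] u) (𝓝 (f u)) :=
      ((hf u (le_of_lt hTu)).continuousAt).continuousWithinAt
    have hfu_le : f u ≤ c₀ / 2 := by
      refine le_of_tendsto hfuc ?_
      filter_upwards [self_mem_nhdsWithin] with t ht
      exact (hlt t ⟨ht.1.le, ht.2⟩).le
    have hfu_eq : f u = c₀ / 2 := le_antisymm hfu_le hfu
    -- derivative at u is negative
    have hcu : c₀ / 2 ≤ c u := hcI u ⟨huIcc.1, le_trans huIcc.2 ht₁.2⟩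
    have hderneg : f u ^ 2 - c u < 0 := by
      rw [hfu_eq]; nlinarith
    -- slope argument
    have hslope : Tendsto (slope f u) (𝓝[≠] u) (𝓝 (f u ^ 2 - c u)) :=
      hasDerivAt_iff_tendsto_slope.mp (hf u hTu.le)
    have hslope' : Tendsto (slope f u) (𝓝[Ioo T u] u) (𝓝 (f u ^ 2 - c u)) :=
      hslope.mono_left (nhdsWithin_mono u (fun x hx => ne_of_lt hx.2))
    have hev : ∀ᶠ t in 𝓝[Ioo T u] u, slope f u t < 0 :=
      hslope'.eventually_lt_const hderneg
    obtain ⟨t, hts, htIoo⟩ := (hev.and self_mem_nhdsWithin).exists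
    have htu : t < u := htIoo.2
    have hneg : t - u < 0 := by linarith
    have hslopet : (f t - f u) / (t - u) < 0 := by
      have heq : slope f u t = (f t - f u) / (t - u) := by
        simp [slope, vsub_eq_sub, div_eq_inv_mul, mul_comm]
      rw [← heq]; exact hts
    have hft_gt : f u < f t := by
      rcases div_neg_iff.mp hslopet with ⟨h1, h2⟩ | ⟨h1, h2⟩
      · linarith
      · linarith
    have := hlt t ⟨htIoo.1.le, htu⟩
    rw [hfu_eq] at hft_gt
    linarith
  -- Step 2 : f decreases fast
  set g := fun t => f t + c₀ / 4 * t with hgdef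
  have hg : ∀ x ∈ Icc T T', HasDerivAt g (f x ^ 2 - c x + c₀ / 4) x := by
    intro x hx
    have h1 : HasDerivAt (fun t => c₀ / 4 * t) (c₀ / 4) x := by
      simpa using (hasDerivAt_id x).const_mul (c₀ / 4)
    exact (hf x hx.1).add h1
  have hanti : AntitoneOn g (Icc T T') := by
    apply antitoneOn_of_deriv_nonpos (convex_Icc T T')
    · exact fun x hx => ((hg x hx).continuousAt).continuousWithinAt
    · intro x hx
      rw [interior_Icc] at hx
      exact ((hg x ⟨hx.1.le, hx.2.le⟩).differentiableAt).differentiableWithinAt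
    · intro x hx
      rw [interior_Icc] at hx
      have hxI : x ∈ Icc T T' := ⟨hx.1.le, hx.2.le⟩
      rw [(hg x hxI).deriv]
      have h1 : 0 ≤ f x := hcon x hxI
      have h2 : f x ≤ c₀ / 2 := hK x hxI
      have h3 : c₀ / 2 ≤ c x := hcI x hxI
      nlinarith
  have hgTT' : g T' ≤ g T :=
    hanti ⟨le_refl T, hTT'.le⟩ ⟨hTT'.le, le_refl T'⟩ hTT'.le
  have hkey : f T' ≤ f T - c₀ / 4 * (c₀ / (2 * C₀)) := by
    have : T' - T = c₀ / (2 * C₀) := by simp [hT'def]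
    simp only [hgdef] at hgTT'
    nlinarith [hgTT']
  have h0 : 0 ≤ f T' := hcon T' ⟨hTT'.le, le_refl T'⟩
  have hq : c₀ / 4 * (c₀ / (2 * C₀)) = c₀ ^ 2 / (8 * C₀) := by
    field_simp; ring
  have hlt2 : c₀ ^ 2 / (1000 * C₀) < c₀ ^ 2 / (8 * C₀) := by
    apply div_lt_div_of_pos_left (by positivity) (by positivity)
    nlinarith
  rw [hq] at hkey
  linarith
end

section
/- For any integer m ≥ 3, ∫_{−π/m}^{π/m} |sin((m/2)(θ−ω))| · sin(mω) dω = −(4/(3m)) · sin(mθ) for all θ ∈ ℝ. -/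
open Real Set intervalIntegral

/-!
Substituting `u = c ω` turns the integral into `c⁻¹ ∫_{-π}^{π} |sin ((cθ - u)/2)| sin u du`.
The integrand is `2π`-periodic in `u`, so the integral may be taken over `[cθ - 2π, cθ]`,
where `sin ((cθ - u)/2) ≥ 0`; without the absolute value the integrand has an elementary
primitive (product-to-sum), which gives `-(4/3) sin (cθ)`.
-/

theorem integral_sin_half_sub_mul_sin (x : ℝ) :
    ∫ u in (x - 2 * π)..x, sin ((x - u) / 2) * sin u = -(4 / 3) * sin x := by
  -- the primitive comes from `sin a sin u = (cos (a - u) - cos (a + u)) / 2`, `a = (x - u) / 2`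
  have hF : ∀ u ∈ uIcc (x - 2 * π) x, HasDerivAt
      (fun u => -(1 / 3) * sin ((x - 3 * u) / 2) - sin ((x + u) / 2))
      (sin ((x - u) / 2) * sin u) u := by
    intro u _
    have h₁ : HasDerivAt (fun u : ℝ => (x - 3 * u) / 2) (-3 / 2) u := by
      simpa using (((hasDerivAt_id u).const_mul 3).const_sub x).div_const 2
    have h₂ : HasDerivAt (fun u : ℝ => (x + u) / 2) (1 / 2) u := by
      simpa using ((hasDerivAt_id u).const_add x).div_const 2
    refine ((h₁.sin.const_mul (-(1 / 3))).sub h₂.sin).congr_deriv ?_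
    rw [show (x - 3 * u) / 2 = (x - u) / 2 - u by ring,
      show (x + u) / 2 = (x - u) / 2 + u by ring, cos_sub, cos_add]
    ring
  have hint : IntervalIntegrable (fun u => sin ((x - u) / 2) * sin u) MeasureTheory.volume
      (x - 2 * π) x := by
    apply Continuous.intervalIntegrable; fun_prop
  rw [integral_eq_sub_of_hasDerivAt hF hint]
  have e₁ : (x - 3 * (x - 2 * π)) / 2 = π - x + 2 * π := by ring
  have e₂ : (x + (x - 2 * π)) / 2 = x - π := by ring
  have e₃ : (x - 3 * x) / 2 = -x := by ring
  have e₄ : (x + x) / 2 = x := by ring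
  simp only [e₁, e₂, e₃, e₄, sin_add_two_pi, sin_pi_sub, sin_sub_pi, sin_neg]
  ring

theorem periodic_abs_sin_half_sub_mul_sin (x : ℝ) :
    Function.Periodic (fun u => |sin ((x - u) / 2)| * sin u) (2 * π) := by
  intro u
  simp only [show (x - (u + 2 * π)) / 2 = (x - u) / 2 - π by ring, sin_sub_pi, abs_neg,
    sin_add_two_pi]

theorem integral_abs_sin_half_sub_mul_sin (x : ℝ) :
    ∫ u in (-π)..π, |sin ((x - u) / 2)| * sin u = -(4 / 3) * sin x := by
  have hshift := (periodic_abs_sin_half_sub_mul_sin x).intervalIntegral_add_eq (-π) (x - 2 * π)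
  rw [show -π + 2 * π = π by ring, sub_add_cancel] at hshift
  rw [hshift, ← integral_sin_half_sub_mul_sin x]
  refine integral_congr fun u hu => ?_
  rw [uIcc_of_le (by linarith [pi_pos])] at hu
  have : 0 ≤ sin ((x - u) / 2) := sin_nonneg_of_nonneg_of_le_pi (by linarith [hu.2])
    (by linarith [hu.1])
  simp only [abs_of_nonneg this]

theorem integral_abs_sin_half_mul_sub_mul_sin_mul (c θ : ℝ) :
    ∫ ω in (-(π / c))..(π / c), |sin (c / 2 * (θ - ω))| * sin (c * ω)
      = -(4 / (3 * c)) * sin (c * θ) := by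
  rcases eq_or_ne c 0 with rfl | hc
  · simp -- `π / 0 = 0`: both sides vanish
  have hscale := integral_comp_mul_left (a := -(π / c)) (b := π / c)
    (fun u => |sin ((c * θ - u) / 2)| * sin u) hc
  rw [mul_neg, mul_div_cancel₀ _ hc, integral_abs_sin_half_sub_mul_sin] at hscale
  have hrw : ∀ ω, c / 2 * (θ - ω) = (c * θ - c * ω) / 2 := fun ω => by ring
  simp only [hrw, hscale, smul_eq_mul]
  field_simp

theorem stmt5_general (m : ℕ) (θ : ℝ) :
    (∫ ω in (-(π / m))..(π / m),
        |Real.sin (((m : ℝ) / 2) * (θ - ω))| * Real.sin ((m : ℝ) * ω))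
      = -(4 / (3 * (m : ℝ))) * Real.sin ((m : ℝ) * θ) :=
  integral_abs_sin_half_mul_sub_mul_sin_mul m θ

theorem stmt5 (m : ℕ) (hm : 3 ≤ m) (θ : ℝ) :
    (∫ ω in (-(π / m))..(π / m),
        |Real.sin (((m : ℝ) / 2) * (θ - ω))| * Real.sin ((m : ℝ) * ω))
      = -(4 / (3 * (m : ℝ))) * Real.sin ((m : ℝ) * θ) :=
  stmt5_general m θ
end

section
/- Let m ≥ 4 be an integer and let h : ℝ → ℝ be continuous, nonnegative, and 2π/m-periodic. Define c_h = 12·(∂_θθ + 4)^{-1} h, where (∂_θθ+4)^{-1} is the inverse of the operator G ↦ G'' + 4G on 2π/m-periodic functions, given by convolution against the kernel K^m(θ) = C_m |sin(mθ/2)| + C̃_m with C_m = 3π/(2(m²−4)) and C̃_m = 1/4 − 3/(m²−4). Then c_h(θ) ≥ C̃_m · (average of h over [−π,π]) · 12 ≥ 0 for all θ, and if c_h(θ₀) = 0 for some θ₀ then h ≡ 0. -/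
/-!
The kernel `K(θ) = C_m |sin (m θ / 2)| + C̃_m` is at least `C̃_m`, and the mean of `h` over one
period equals its mean over `[-π, π]`; this gives the lower bound. For rigidity, the integrand
`ω ↦ K(θ₀ - ω) h(ω)` is `2π/m`-periodic, so `c_h(θ₀)` may be computed over a period centred at a
point `θ` with `h θ > 0`. There `h` is positive on an open interval, and the zeros of `K` are
countable, so the continuous nonnegative integrand is positive somewhere inside the window.
-/

open Real Set intervalIntegral Function

noncomputable def sinKernel (C C' m θ : ℝ) : ℝ := C * |sin (m / 2 * θ)| + C'

section sinKernel

variable {C C' m : ℝ}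

lemma continuous_sinKernel : Continuous (sinKernel C C' m) := by
  unfold sinKernel
  fun_prop

lemma sinKernel_periodic (hm : m ≠ 0) : Periodic (sinKernel C C' m) (2 * π / m) := by
  intro θ
  have hshift : m / 2 * (θ + 2 * π / m) = m / 2 * θ + π := by field_simp
  simp only [sinKernel, hshift, sin_add_pi, abs_neg]

lemma le_sinKernel (hC : 0 ≤ C) (θ : ℝ) : C' ≤ sinKernel C C' m θ :=
  le_add_of_nonneg_left (mul_nonneg hC (abs_nonneg _))

lemma sinKernel_nonneg (hC : 0 ≤ C) (hC' : 0 ≤ C') (θ : ℝ) : 0 ≤ sinKernel C C' m θ :=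
  hC'.trans (le_sinKernel hC θ)

lemma countable_setOf_sinKernel_eq_zero (hC : 0 < C) (hC' : 0 ≤ C') (hm : m ≠ 0) :
    {θ | sinKernel C C' m θ = 0}.Countable := by
  refine (countable_range fun k : ℤ => 2 * k * π / m).mono fun θ hθ => ?_
  have hCsin : C * |sin (m / 2 * θ)| = 0 := by
    have hθ' : C * |sin (m / 2 * θ)| + C' = 0 := hθ
    have := mul_nonneg hC.le (abs_nonneg (sin (m / 2 * θ)))
    linarith
  obtain ⟨k, hk⟩ := sin_eq_zero_iff.1 (abs_eq_zero.1 ((mul_eq_zero.1 hCsin).resolve_left hC.ne'))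
  exact ⟨k, by field_simp; linarith⟩

end sinKernel

lemma Function.Periodic.intervalIntegral_neg_eq_nat_mul {f : ℝ → ℝ} {a : ℝ} {n : ℕ}
    (hn : n ≠ 0) (hf : Periodic f (2 * a / n))
    (hfi : ∀ t₁ t₂, IntervalIntegrable f MeasureTheory.volume t₁ t₂) :
    ∫ x in -a..a, f x = n * ∫ x in -(a / n)..a / n, f x := by
  have hwhole := hf.intervalIntegral_add_zsmul_eq n (-a) hfi
  have hperiod := hf.intervalIntegral_add_eq (-a) (-(a / n))
  rw [show -a + (n : ℤ) • (2 * a / n) = a by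
    simp only [zsmul_eq_mul, Int.cast_natCast]; field_simp; ring] at hwhole
  rw [show -(a / n) + 2 * a / n = a / n by field_simp; ring] at hperiod
  rw [hwhole, hperiod, zsmul_eq_mul, Int.cast_natCast]

lemma mul_integral_le_integral_mul {K h : ℝ → ℝ} {a b c : ℝ} (hab : a ≤ b)
    (hK : ∀ x ∈ Icc a b, c ≤ K x) (hh : ∀ x ∈ Icc a b, 0 ≤ h x)
    (hhi : IntervalIntegrable h MeasureTheory.volume a b)
    (hKhi : IntervalIntegrable (fun x => K x * h x) MeasureTheory.volume a b) :
    c * ∫ x in a..b, h x ≤ ∫ x in a..b, K x * h x := by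
  rw [← integral_const_mul]
  exact integral_mono_on hab (hhi.const_mul c) hKhi fun x hx =>
    mul_le_mul_of_nonneg_right (hK x hx) (hh x hx)

lemma integral_mul_pos_of_countable_zeros {K h : ℝ → ℝ} {a b x : ℝ}
    (hK : Continuous K) (hh : Continuous h) (hK0 : ∀ y, 0 ≤ K y) (hh0 : ∀ y, 0 ≤ h y)
    (hZ : {y | K y = 0}.Countable) (hx : x ∈ Ioo a b) (hhx : 0 < h x) :
    0 < ∫ y in a..b, K y * h y := by
  obtain ⟨c, ⟨hcab, hhc⟩, hKc⟩ := (hZ.dense_compl ℝ).inter_open_nonempty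
    (Ioo a b ∩ {y | 0 < h y}) (isOpen_Ioo.inter (isOpen_lt continuous_const hh)) ⟨x, hx, hhx⟩
  refine integral_pos (hx.1.trans hx.2) (hK.mul hh).continuousOn
    (fun y _ => mul_nonneg (hK0 y) (hh0 y)) ⟨c, Ioo_subset_Icc_self hcab, ?_⟩
  exact mul_pos ((hK0 c).lt_of_ne (Ne.symm hKc)) hhc

lemma integral_sinKernel_mul_pos {C C' m : ℝ} (hC : 0 < C) (hC' : 0 ≤ C') (hm : 0 < m)
    {h : ℝ → ℝ} (hh : Continuous h) (hh0 : ∀ x, 0 ≤ h x) (hper : Periodic h (2 * π / m))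
    {θ : ℝ} (hθ : 0 < h θ) (θ₀ : ℝ) :
    0 < ∫ ω in -(π / m)..π / m, sinKernel C C' m (θ₀ - ω) * h ω := by
  have hK := sinKernel_periodic (C := C) (C' := C') hm.ne'
  have hwindow := ((hK.const_sub θ₀).mul hper).intervalIntegral_add_eq (-(π / m)) (θ - π / m)
  rw [show -(π / m) + 2 * π / m = π / m by field_simp; ring,
    show θ - π / m + 2 * π / m = θ + π / m by field_simp; ring] at hwindow
  have hπm : 0 < π / m := div_pos pi_pos hm
  simp only [Pi.mul_apply] at hwindow
  rw [hwindow]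
  exact integral_mul_pos_of_countable_zeros (continuous_sinKernel.comp (continuous_sub_left θ₀))
    hh (fun ω => sinKernel_nonneg hC.le hC' _) hh0
    ((countable_setOf_sinKernel_eq_zero hC hC' hm.ne').preimage sub_right_injective)
    ⟨by linarith, by linarith⟩ hθ

theorem stmt7 (m : ℕ) (hm : 4 ≤ m) (h : ℝ → ℝ)
    (hcont : Continuous h) (hnn : ∀ θ, 0 ≤ h θ)
    (hper : ∀ θ, h (θ + 2 * π / m) = h θ)
    (ch : ℝ → ℝ)
    (hch : ∀ θ, ch θ = 12 * ((m : ℝ) / (2 * π)) *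
        ∫ ω in (-(π / m))..(π / m),
          ((3 * π / (2 * ((m : ℝ) ^ 2 - 4))) * |Real.sin (((m : ℝ) / 2) * (θ - ω))| +
            (1 / 4 - 3 / ((m : ℝ) ^ 2 - 4))) * h ω) :
    (∀ θ, 12 * (1 / 4 - 3 / ((m : ℝ) ^ 2 - 4)) * ((1 / (2 * π)) * ∫ ω in (-π)..π, h ω) ≤ ch θ ∧
        0 ≤ 12 * (1 / 4 - 3 / ((m : ℝ) ^ 2 - 4)) * ((1 / (2 * π)) * ∫ ω in (-π)..π, h ω)) ∧
    (∀ θ₀, ch θ₀ = 0 → ∀ θ, h θ = 0) := by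
  have hm4 : (4 : ℝ) ≤ m := by exact_mod_cast hm
  have hC : 0 < 3 * π / (2 * ((m : ℝ) ^ 2 - 4)) := div_pos (by positivity) (by nlinarith)
  have hC' : 0 ≤ 1 / 4 - 3 / ((m : ℝ) ^ 2 - 4) := by
    rw [sub_nonneg, div_le_div_iff₀ (by nlinarith) (by norm_num)]
    nlinarith
  set C := 3 * π / (2 * ((m : ℝ) ^ 2 - 4))
  set C' := 1 / 4 - 3 / ((m : ℝ) ^ 2 - 4)
  have hch' : ∀ θ, ch θ = 12 * ((m : ℝ) / (2 * π)) *
      ∫ ω in -(π / m)..π / m, sinKernel C C' m (θ - ω) * h ω := hch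
  have hint : ∫ ω in -π..π, h ω = m * ∫ ω in -(π / m)..π / m, h ω :=
    Periodic.intervalIntegral_neg_eq_nat_mul (by omega) hper fun _ _ => hcont.intervalIntegrable _ _
  have hπm : 0 < π / m := div_pos pi_pos (by positivity)
  refine ⟨fun θ => ⟨?_, ?_⟩, fun θ₀ hθ₀ θ => ?_⟩
  · rw [hch', hint]
    calc 12 * C' * (1 / (2 * π) * (m * ∫ ω in -(π / m)..π / m, h ω))
        = 12 * (m / (2 * π)) * (C' * ∫ ω in -(π / m)..π / m, h ω) := by ring
      _ ≤ _ := by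
        gcongr
        exact mul_integral_le_integral_mul (by linarith) (fun ω _ => le_sinKernel hC.le _)
          (fun ω _ => hnn ω) (hcont.intervalIntegrable _ _)
          (((continuous_sinKernel.comp (continuous_sub_left θ)).mul hcont).intervalIntegrable _ _)
  · have : 0 ≤ ∫ ω in -π..π, h ω := integral_nonneg (neg_le_self pi_pos.le) fun ω _ => hnn ω
    positivity
  · by_contra hθ
    have hpos := integral_sinKernel_mul_pos hC hC' (by positivity) hcont hnn hper
      ((hnn θ).lt_of_ne (Ne.symm hθ)) θ₀
    have : 0 < ch θ₀ := by rw [hch']; positivity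
    linarith
end

section
/- Let G be a C² function on an interval [b₀, b₁] of length less than π/4 satisfying G'' + 4G = g₀ for a constant g₀ ∈ ℝ. If G'(b₀) > 0 and G'(b₁) > 0, then G'(θ) > 0 for all θ ∈ (b₀, b₁). -/
/-!
Since `G'' + 4G` is constant, `u = G'` solves `u'' = -4u`. Comparing `u` through constant
Wronskians with the solutions `sin (2(θ - b₀))` and `sin (2(θ - b₁))` gives the interpolation formula
`u θ · sin (2(b₁ - b₀)) = u b₀ · sin (2(b₁ - θ)) + u b₁ · sin (2(θ - b₀))`.
On an interval of length less than `π/4` all three sines are positive.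
-/

open Real Set

section Wronskian

variable {a b c : ℝ} {u u' v v' : ℝ → ℝ}

theorem wronskian_eq_of_hasDerivWithinAt
    (hu : ∀ x ∈ Icc a b, HasDerivWithinAt u (u' x) (Icc a b) x)
    (hu' : ∀ x ∈ Icc a b, HasDerivWithinAt u' (-c * u x) (Icc a b) x)
    (hv : ∀ x ∈ Icc a b, HasDerivWithinAt v (v' x) (Icc a b) x)
    (hv' : ∀ x ∈ Icc a b, HasDerivWithinAt v' (-c * v x) (Icc a b) x) :
    ∀ x ∈ Icc a b, u x * v' x - u' x * v x = u a * v' a - u' a * v a := by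
  have hW : ∀ x ∈ Icc a b,
      HasDerivWithinAt (fun x => u x * v' x - u' x * v x) 0 (Icc a b) x := fun x hx =>
    (((hu x hx).mul (hv' x hx)).sub ((hu' x hx).mul (hv x hx))).congr_deriv (by ring)
  refine constant_of_has_deriv_right_zero (HasDerivWithinAt.continuousOn hW) fun x hx => ?_
  exact (hW x (Ico_subset_Icc_self hx)).mono_of_mem_nhdsWithin (Icc_mem_nhdsGE_of_mem hx)

end Wronskian

theorem hasDerivAt_sin_mul_sub (ω a x : ℝ) :
    HasDerivAt (fun x => sin (ω * (x - a))) (ω * cos (ω * (x - a))) x :=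
  (((hasDerivAt_id' x).sub_const a).const_mul ω).sin.congr_deriv (by ring)

theorem hasDerivAt_mul_cos_mul_sub (ω a x : ℝ) :
    HasDerivAt (fun x => ω * cos (ω * (x - a))) (-ω ^ 2 * sin (ω * (x - a))) x :=
  ((((hasDerivAt_id' x).sub_const a).const_mul ω).cos.const_mul ω).congr_deriv (by ring)

theorem mul_sin_eq_of_hasDerivWithinAt {a b ω : ℝ} {u u' : ℝ → ℝ}
    (hu : ∀ x ∈ Icc a b, HasDerivWithinAt u (u' x) (Icc a b) x)
    (hu' : ∀ x ∈ Icc a b, HasDerivWithinAt u' (-ω ^ 2 * u x) (Icc a b) x)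
    {x : ℝ} (hx : x ∈ Icc a b) :
    u x * sin (ω * (b - a)) = u a * sin (ω * (b - x)) + u b * sin (ω * (x - a)) := by
  have hab : b ∈ Icc a b := ⟨hx.1.trans hx.2, le_rfl⟩
  have wronskian (p : ℝ) : ∀ y ∈ Icc a b,
      u y * (ω * cos (ω * (y - p))) - u' y * sin (ω * (y - p))
        = u a * (ω * cos (ω * (a - p))) - u' a * sin (ω * (a - p)) :=
    wronskian_eq_of_hasDerivWithinAt hu hu'
      (fun y _ => (hasDerivAt_sin_mul_sub ω p y).hasDerivWithinAt)
      (fun y _ => (hasDerivAt_mul_cos_mul_sub ω p y).hasDerivWithinAt)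
  have e₀ := wronskian a x hx
  have e₁ := (wronskian b x hx).trans (wronskian b b hab).symm
  simp only [sub_self, mul_zero, sin_zero, cos_zero, mul_one, sub_zero] at e₀ e₁
  rcases eq_or_ne ω 0 with rfl | hω
  · simp
  refine mul_left_cancel₀ hω ?_
  have hsin : sin (ω * (b - a)) = sin (ω * (x - a)) * cos (ω * (x - b))
      - cos (ω * (x - a)) * sin (ω * (x - b)) := by
    rw [← sin_sub]; ring_nf
  have hsin' : sin (ω * (b - x)) = -sin (ω * (x - b)) := by
    rw [← sin_neg]; ring_nf
  rw [hsin, hsin']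
  linear_combination sin (ω * (x - a)) * e₁ - sin (ω * (x - b)) * e₀

theorem stmt8_general (b₀ b₁ g₀ : ℝ) (hlt : b₀ < b₁) (hlen : b₁ - b₀ < π / 4)
    (G G' : ℝ → ℝ)
    (hG : ∀ θ ∈ Icc b₀ b₁, HasDerivWithinAt G (G' θ) (Icc b₀ b₁) θ)
    (hG' : ∀ θ ∈ Icc b₀ b₁, HasDerivWithinAt G' (g₀ - 4 * G θ) (Icc b₀ b₁) θ)
    (h0 : 0 < G' b₀) (h1 : 0 < G' b₁) :
    ∀ θ ∈ Ioo b₀ b₁, 0 < G' θ := by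
  intro θ hθ
  have hG'' : ∀ θ ∈ Icc b₀ b₁,
      HasDerivWithinAt (fun θ => g₀ - 4 * G θ) (-2 ^ 2 * G' θ) (Icc b₀ b₁) θ := fun θ hθ =>
    (((hG θ hθ).const_mul 4).const_sub g₀).congr_deriv (by ring)
  have key := mul_sin_eq_of_hasDerivWithinAt hG' hG'' (Ioo_subset_Icc_self hθ)
  have sin_two_mul_pos {t : ℝ} (ht₀ : 0 < t) (ht₁ : t ≤ b₁ - b₀) : 0 < sin (2 * t) :=
    sin_pos_of_pos_of_lt_pi (by linarith) (by linarith [pi_pos])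
  have hs := sin_two_mul_pos (sub_pos.2 hlt) le_rfl
  have hs₀ := sin_two_mul_pos (sub_pos.2 hθ.2) (by linarith [hθ.1])
  have hs₁ := sin_two_mul_pos (sub_pos.2 hθ.1) (by linarith [hθ.2])
  refine pos_of_mul_pos_left ?_ hs.le
  rw [key]
  positivity

theorem stmt8 (b₀ b₁ g₀ : ℝ) (hlt : b₀ < b₁) (hlen : b₁ - b₀ < π / 4)
    (G G' : ℝ → ℝ)
    (hG : ∀ θ ∈ Icc b₀ b₁, HasDerivWithinAt G (G' θ) (Icc b₀ b₁) θ)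
    (hG' : ∀ θ ∈ Icc b₀ b₁, HasDerivWithinAt G' (g₀ - 4 * G θ) (Icc b₀ b₁) θ)
    (hGcont : ContinuousOn G (Icc b₀ b₁)) (hG'cont : ContinuousOn G' (Icc b₀ b₁))
    (h0 : 0 < G' b₀) (h1 : 0 < G' b₁) :
    ∀ θ ∈ Ioo b₀ b₁, 0 < G' θ :=
  stmt8_general b₀ b₁ g₀ hlt hlen G G' hG hG' h0 h1
end

section
/- Let g : ℝ → ℝ be a nonzero piecewise constant 2π/m-periodic steady state of the scale-invariant Euler system, with jump points a₀ < a₁ < ... and values gᵢ on (a_{i−1}, aᵢ), and let G solve G'' + 4G = g with G ∈ C¹. Then the C¹ matching condition at each jump point aᵢ forces gᵢ·tan(aᵢ − a_{i−1}) = −g_{i+1}·tan(a_{i+1} − aᵢ); in particular the values gᵢ strictly alternate in sign. -/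
/-!
On each side of the jump, `G` is the solution of `G'' + 4G = gᵢ` vanishing at both ends of the
interval. By the half-angle identity `(1 - cos 2x) / sin 2x = tan x`, its one-sided slopes at the
ends of an interval of length `ℓ` are `∓ 2 gᵢ tan ℓ`, so matching the slopes at the jump gives the
relation, and `tan > 0` on `(0, π/2)` gives the alternation of signs.
-/

open Real Set

/-- Holds for every `x`, since `sin (2 * x) = 0` forces `tan x = 0` under the convention `x / 0 = 0`. -/
theorem Real.one_sub_cos_two_mul_div_sin_two_mul (x : ℝ) :
    (1 - cos (2 * x)) / sin (2 * x) = tan x := by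
  rw [cos_two_mul, cos_sq', sin_two_mul, tan_eq_sin_div_cos]
  rcases eq_or_ne (sin x) 0 with hs | hs
  · simp [hs]
  rcases eq_or_ne (cos x) 0 with hc | hc
  · simp [hc]
  field_simp
  ring

/-- The solution of `G'' + 4G = g` on `[a, b]` vanishing at both endpoints. -/
noncomputable def jumpProfile (g a b θ : ℝ) : ℝ :=
  g * (1 + (sin (2 * (θ - b)) - sin (2 * (θ - a))) / sin (2 * (b - a)))

theorem hasDerivAt_jumpProfile (g a b θ : ℝ) :
    HasDerivAt (jumpProfile g a b)
      (g * ((2 * cos (2 * (θ - b)) - 2 * cos (2 * (θ - a))) / sin (2 * (b - a)))) θ := by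
  have hsin (c : ℝ) : HasDerivAt (fun θ => sin (2 * (θ - c))) (2 * cos (2 * (θ - c))) θ := by
    simpa [mul_comm] using ((hasDerivAt_id θ).sub_const c).const_mul 2 |>.sin
  exact ((((hsin b).sub (hsin a)).div_const _).const_add 1).const_mul g

theorem hasDerivAt_jumpProfile_right (g a b : ℝ) :
    HasDerivAt (jumpProfile g a b) (2 * g * tan (b - a)) b := by
  convert hasDerivAt_jumpProfile g a b b using 1
  rw [← one_sub_cos_two_mul_div_sin_two_mul]
  simp only [sub_self, mul_zero, cos_zero]
  ring

theorem hasDerivAt_jumpProfile_left (g a b : ℝ) :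
    HasDerivAt (jumpProfile g a b) (-(2 * g * tan (b - a))) a := by
  convert hasDerivAt_jumpProfile g a b a using 1
  rw [← one_sub_cos_two_mul_div_sin_two_mul, show 2 * (a - b) = -(2 * (b - a)) by ring, cos_neg]
  simp only [sub_self, mul_zero, cos_zero]
  ring

theorem HasDerivWithinAt.eq_of_eqOn_Icc_right {G f : ℝ → ℝ} {a b d d' : ℝ} (hab : a < b)
    (hG : HasDerivWithinAt G d (Icc a b) b) (hf : HasDerivAt f d' b) (h : EqOn G f (Icc a b)) :
    d = d' :=
  ((uniqueDiffOn_Icc hab) b (right_mem_Icc.2 hab.le)).eq_deriv _ hG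
    (hf.hasDerivWithinAt.congr h (h (right_mem_Icc.2 hab.le)))

theorem HasDerivWithinAt.eq_of_eqOn_Icc_left {G f : ℝ → ℝ} {a b d d' : ℝ} (hab : a < b)
    (hG : HasDerivWithinAt G d (Icc a b) a) (hf : HasDerivAt f d' a) (h : EqOn G f (Icc a b)) :
    d = d' :=
  ((uniqueDiffOn_Icc hab) a (left_mem_Icc.2 hab.le)).eq_deriv _ hG
    (hf.hasDerivWithinAt.congr h (h (left_mem_Icc.2 hab.le)))

theorem mul_neg_of_mul_eq_neg_mul {x y s t : ℝ} (hx : x ≠ 0) (hs : 0 < s) (ht : 0 < t)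
    (h : x * s = -y * t) : x * y < 0 := by
  have : x * y * t = -(x ^ 2 * s) := by linear_combination x * h
  nlinarith [mul_pos (sq_pos_of_ne_zero hx) hs]

theorem stmt14 (aprev amid anext gi gi1 : ℝ)
    (h1 : aprev < amid) (h2 : amid < anext)
    (hl1 : amid - aprev < π / 2) (hl2 : anext - amid < π / 2)
    (hgi : gi ≠ 0)
    (G : ℝ → ℝ)
    (hGleft : ∀ θ ∈ Icc aprev amid,
      G θ = gi * (1 + (Real.sin (2 * (θ - amid)) - Real.sin (2 * (θ - aprev))) /
        Real.sin (2 * (amid - aprev))))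
    (hGright : ∀ θ ∈ Icc amid anext,
      G θ = gi1 * (1 + (Real.sin (2 * (θ - anext)) - Real.sin (2 * (θ - amid))) /
        Real.sin (2 * (anext - amid))))
    (hC1 : ∃ d, HasDerivWithinAt G d (Icc aprev amid) amid ∧
      HasDerivWithinAt G d (Icc amid anext) amid) :
    gi * Real.tan (amid - aprev) = -gi1 * Real.tan (anext - amid) ∧ gi * gi1 < 0 := by
  obtain ⟨d, hdL, hdR⟩ := hC1
  have eL := hdL.eq_of_eqOn_Icc_right h1 (hasDerivAt_jumpProfile_right gi aprev amid) hGleft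
  have eR := hdR.eq_of_eqOn_Icc_left h2 (hasDerivAt_jumpProfile_left gi1 amid anext) hGright
  have hmatch : gi * tan (amid - aprev) = -gi1 * tan (anext - amid) := by
    linear_combination (eR - eL) / 2
  refine ⟨hmatch, mul_neg_of_mul_eq_neg_mul hgi ?_ ?_ hmatch⟩
  · exact tan_pos_of_pos_of_lt_pi_div_two (by linarith) hl1
  · exact tan_pos_of_pos_of_lt_pi_div_two (by linarith) hl2
end

section
/- Let gᵢ ∈ ℝ, gᵢ ≠ 0, and consider the recursion gᵢ·tan(xᵢ) = −g_{i+1}·tan(x_{i+1}) where xᵢ = aᵢ − a_{i−1} > 0 are the gap lengths with all xᵢ ∈ (0, π/2). Then all the gaps x₂,...,x_{2n} are uniquely determined by x₁, and each xᵢ is a strictly increasing continuous function of x₁. Consequently, the constraint x₁ + ... + x_{2n} = 2π/m determines x₁ (and hence all gaps) uniquely. -/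
/-! Since `tan` is strictly increasing on `(-π/2, π/2)` and each step of the recursion multiplies
`tan xᵢ` by a positive factor, the whole sequence of gaps is a strictly increasing function of the
first gap. Two solutions with equal total length therefore cannot have different first gaps, and equal first gaps propagate along the chain by injectivity of `tan`. -/

open Real Set

structure IsTanChain (N : ℕ) (c x : ℕ → ℝ) : Prop where
  mem_Ioo : ∀ i < N, x i ∈ Ioo (-(π / 2)) (π / 2)
  tan_succ : ∀ i, i + 1 < N → tan (x (i + 1)) = c i * tan (x i)

namespace IsTanChain

variable {N : ℕ} {c x x' : ℕ → ℝ}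

theorem lt_of_lt (hx : IsTanChain N c x) (hx' : IsTanChain N c x')
    (hc : ∀ i, i + 1 < N → 0 < c i) (h0 : x 0 < x' 0) : ∀ i < N, x i < x' i := by
  intro i
  induction i with
  | zero => exact fun _ ↦ h0
  | succ k ih =>
    intro hk
    have hk' : k < N := by omega
    have htan : tan (x k) < tan (x' k) :=
      strictMonoOn_tan (hx.mem_Ioo k hk') (hx'.mem_Ioo k hk') (ih hk')
    refine (strictMonoOn_tan.lt_iff_lt (hx.mem_Ioo _ hk) (hx'.mem_Ioo _ hk)).mp ?_
    rw [hx.tan_succ k hk, hx'.tan_succ k hk]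
    exact mul_lt_mul_of_pos_left htan (hc k hk)

theorem eq_of_eq (hx : IsTanChain N c x) (hx' : IsTanChain N c x') (h0 : x 0 = x' 0) :
    ∀ i < N, x i = x' i := by
  intro i
  induction i with
  | zero => exact fun _ ↦ h0
  | succ k ih =>
    intro hk
    refine injOn_tan (hx.mem_Ioo _ hk) (hx'.mem_Ioo _ hk) ?_
    rw [hx.tan_succ k hk, hx'.tan_succ k hk, ih (by omega)]

theorem eq_of_sum_eq (hx : IsTanChain N c x) (hx' : IsTanChain N c x')
    (hc : ∀ i, i + 1 < N → 0 < c i)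
    (hsum : ∑ i ∈ Finset.range N, x i = ∑ i ∈ Finset.range N, x' i) :
    ∀ i < N, x i = x' i := by
  rcases Nat.eq_zero_or_pos N with rfl | hN
  · simp
  have hne : (Finset.range N).Nonempty := Finset.nonempty_range_iff.mpr hN.ne'
  refine hx.eq_of_eq hx' ?_
  rcases lt_trichotomy (x 0) (x' 0) with h | h | h
  · have := Finset.sum_lt_sum_of_nonempty hne fun i hi ↦
      hx.lt_of_lt hx' hc h i (Finset.mem_range.mp hi)
    exact absurd hsum this.ne
  · exact h
  · have := Finset.sum_lt_sum_of_nonempty hne fun i hi ↦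
      hx'.lt_of_lt hx hc h i (Finset.mem_range.mp hi)
    exact absurd hsum.symm this.ne

end IsTanChain

theorem stmt15_general (n m : ℕ)
    (g : ℕ → ℝ)
    (halt : ∀ i, i + 1 < 2 * n → g i * g (i + 1) < 0)
    (x x' : ℕ → ℝ)
    (hx : ∀ i < 2 * n, x i ∈ Ioo 0 (π / 2))
    (hx' : ∀ i < 2 * n, x' i ∈ Ioo 0 (π / 2))
    (hrec : ∀ i, i + 1 < 2 * n →
      Real.tan (x (i + 1)) = (-(g i) / g (i + 1)) * Real.tan (x i))
    (hrec' : ∀ i, i + 1 < 2 * n →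
      Real.tan (x' (i + 1)) = (-(g i) / g (i + 1)) * Real.tan (x' i)) :
    (x 0 < x' 0 → ∀ i < 2 * n, x i < x' i) ∧
    ((∑ i ∈ Finset.range (2 * n), x i) = 2 * π / m →
      (∑ i ∈ Finset.range (2 * n), x' i) = 2 * π / m →
      ∀ i < 2 * n, x i = x' i) := by
  have hsub : Ioo 0 (π / 2) ⊆ Ioo (-(π / 2)) (π / 2) :=
    Ioo_subset_Ioo_left (by linarith [pi_pos])
  have hchain : IsTanChain (2 * n) (fun i ↦ -(g i) / g (i + 1)) x :=
    ⟨fun i hi ↦ hsub (hx i hi), hrec⟩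
  have hchain' : IsTanChain (2 * n) (fun i ↦ -(g i) / g (i + 1)) x' :=
    ⟨fun i hi ↦ hsub (hx' i hi), hrec'⟩
  have hc : ∀ i, i + 1 < 2 * n → 0 < -(g i) / g (i + 1) := fun i hi ↦ by
    rw [neg_div, neg_pos]
    exact div_neg_iff.mpr (mul_neg_iff.mp (halt i hi))
  exact ⟨hchain.lt_of_lt hchain' hc,
    fun hs hs' ↦ hchain.eq_of_sum_eq hchain' hc (hs.trans hs'.symm)⟩

theorem stmt15 (n m : ℕ) (hn : 1 ≤ n) (hm : 4 ≤ m)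
    (g : ℕ → ℝ) (hg : ∀ i < 2 * n, g i ≠ 0)
    (halt : ∀ i, i + 1 < 2 * n → g i * g (i + 1) < 0)
    (x x' : ℕ → ℝ)
    (hx : ∀ i < 2 * n, x i ∈ Ioo 0 (π / 2))
    (hx' : ∀ i < 2 * n, x' i ∈ Ioo 0 (π / 2))
    (hrec : ∀ i, i + 1 < 2 * n →
      Real.tan (x (i + 1)) = (-(g i) / g (i + 1)) * Real.tan (x i))
    (hrec' : ∀ i, i + 1 < 2 * n →
      Real.tan (x' (i + 1)) = (-(g i) / g (i + 1)) * Real.tan (x' i)) :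
    (x 0 < x' 0 → ∀ i < 2 * n, x i < x' i) ∧
    ((∑ i ∈ Finset.range (2 * n), x i) = 2 * π / m →
      (∑ i ∈ Finset.range (2 * n), x' i) = 2 * π / m →
      ∀ i < 2 * n, x i = x' i) :=
  stmt15_general n m g halt x x' hx hx' hrec hrec'
end

section
/- Let K(x,y) = (1/2π)·(x−y)^⊥/|x−y|² be the 2d Biot–Savart kernel and, for m ≥ 3, let K_m(x,y) = (1/m)·Σ_{i=1}^m K(x, R_i y) where R_i is rotation by 2πi/m. Let ω ∈ L^∞(ℝ²) be m-fold symmetric with ω(y) → 0 as y → 0. If in addition |K_m(x,y)| ≤ C_m |x|^{m−1}/|y|^m for |y| ≥ 2|x|, then the velocity u(x) = ∫ K_m(x,y)ω(y)dy satisfies |u(x)|/|x| → 0 as x → 0. -/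
/-!
Split `u x = ∫ K_m(x, y) ω(y) dy` at `|y| = 2|x|`. On the disc `|y| < 2|x|` the kernel is bounded
by an average of `(2π |x - R_i y|)⁻¹`, whose integral over the disc is at most `3|x|`, while `ω` is
small there; this contributes `o(|x|)`. Outside the disc the decay bound gives
`|K_m(x, y)| ≤ C_m |x|² / |y|³`, and `∫_{|y| ≥ R} |y|⁻³ dy = 2π / R`: the annulus `2|x| ≤ |y| < δ`,
where `ω` is small, contributes `o(|x|)`, and the rest, where only `|ω| ≤ W` is known,
contributes `O(|x|²)`.
-/

open Real Set Filter MeasureTheory Topology Metric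
open scoped ENNReal

theorem Complex.lintegral_comp_norm {g : ℝ → ℝ≥0∞} (hg : Measurable g) :
    ∫⁻ z : ℂ, g ‖z‖ = ENNReal.ofReal (2 * π) * ∫⁻ r in Ioi 0, ENNReal.ofReal r * g r := by
  rw [← Complex.lintegral_comp_polarCoord_symm, polarCoord_target, Measure.volume_eq_prod]
  calc ∫⁻ p in Ioi 0 ×ˢ Ioo (-π) π,
        ENNReal.ofReal p.1 • g ‖Complex.polarCoord.symm p‖ ∂(volume.prod volume)
      = ∫⁻ p in Ioi 0 ×ˢ Ioo (-π) π, ENNReal.ofReal p.1 * g p.1 * 1 ∂(volume.prod volume) := by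
        refine setLIntegral_congr_fun ((measurableSet_Ioi (a := (0 : ℝ))).prod
          (measurableSet_Ioo (a := -π) (b := π))) fun p hp => ?_
        rw [Complex.norm_polarCoord_symm, abs_of_pos (show (0 : ℝ) < p.1 from hp.1), smul_eq_mul,
          mul_one]
    _ = _ := by
        rw [← Measure.prod_restrict, lintegral_prod_mul (f := fun r => ENNReal.ofReal r * g r)
          (g := fun _ => 1) (by fun_prop) aemeasurable_const, lintegral_const,
          Measure.restrict_apply_univ, Real.volume_Ioo, one_mul, mul_comm]
        ring_nf

theorem lintegral_ball_inv_norm (r : ℝ) :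
    ∫⁻ z in ball (0 : ℂ) r, ENNReal.ofReal ‖z‖⁻¹ = ENNReal.ofReal (2 * π * r) := by
  have hind : (ball (0 : ℂ) r).indicator (fun z => ENNReal.ofReal ‖z‖⁻¹) =
      fun z => (Iio r).indicator (fun t => ENNReal.ofReal t⁻¹) ‖z‖ := by
    ext z; by_cases hz : ‖z‖ < r <;> simp [indicator, hz]
  rw [← lintegral_indicator measurableSet_ball, hind,
    Complex.lintegral_comp_norm ((by fun_prop : Measurable fun t : ℝ =>
      ENNReal.ofReal t⁻¹).indicator measurableSet_Iio)]
  have hradial : ∀ t ∈ Ioi (0 : ℝ), ENNReal.ofReal t * (Iio r).indicator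
      (fun t => ENNReal.ofReal t⁻¹) t = (Iio r).indicator 1 t := by
    intro t ht
    by_cases htr : t < r
    · simp [htr, ← ENNReal.ofReal_mul ht.out.le, mul_inv_cancel₀ ht.out.ne']
    · simp [htr]
  rw [setLIntegral_congr_fun measurableSet_Ioi hradial, lintegral_indicator_one measurableSet_Iio,
    Measure.restrict_apply measurableSet_Iio, Iio_inter_Ioi, Real.volume_Ioo, sub_zero,
    ← ENNReal.ofReal_mul (by positivity)]

theorem lintegral_compl_ball_inv_norm_cube {R : ℝ} (hR : 0 < R) :
    ∫⁻ z in (ball (0 : ℂ) R)ᶜ, ENNReal.ofReal (‖z‖ ^ 3)⁻¹ = ENNReal.ofReal (2 * π / R) := by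
  have hind : (ball (0 : ℂ) R)ᶜ.indicator (fun z => ENNReal.ofReal (‖z‖ ^ 3)⁻¹) =
      fun z => (Ici R).indicator (fun t => ENNReal.ofReal (t ^ 3)⁻¹) ‖z‖ := by
    ext z; by_cases hz : R ≤ ‖z‖ <;> simp [indicator, hz]
  rw [← lintegral_indicator measurableSet_ball.compl, hind,
    Complex.lintegral_comp_norm ((by fun_prop : Measurable fun t : ℝ =>
      ENNReal.ofReal (t ^ 3)⁻¹).indicator measurableSet_Ici)]
  have hradial : ∀ t ∈ Ioi (0 : ℝ), ENNReal.ofReal t * (Ici R).indicator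
      (fun t => ENNReal.ofReal (t ^ 3)⁻¹) t =
        (Ici R).indicator (fun t => ENNReal.ofReal (t ^ (-2 : ℝ))) t := by
    intro t ht
    by_cases htr : R ≤ t
    · simp only [indicator_of_mem (mem_Ici.2 htr), ← ENNReal.ofReal_mul ht.out.le]
      congr 1
      rw [Real.rpow_neg ht.out.le, Real.rpow_two]
      field_simp
    · simp [htr]
  rw [setLIntegral_congr_fun measurableSet_Ioi hradial, lintegral_indicator measurableSet_Ici,
    Measure.restrict_restrict measurableSet_Ici, inter_eq_left.2 (Ici_subset_Ioi.2 hR),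
    ← setLIntegral_congr Ioi_ae_eq_Ici, ← ofReal_integral_eq_lintegral_ofReal
      (integrableOn_Ioi_rpow_of_lt (by norm_num) hR)
      (ae_restrict_of_forall_mem measurableSet_Ioi fun t ht => Real.rpow_nonneg (hR.trans ht).le _),
    integral_Ioi_rpow_of_lt (by norm_num) hR, ← ENNReal.ofReal_mul (by positivity)]
  norm_num [Real.rpow_neg_one, div_eq_mul_inv]

theorem lintegral_ball_inv_norm_sub_le (x : ℂ) (r : ℝ) :
    ∫⁻ y in ball (0 : ℂ) r, ENNReal.ofReal ‖x - y‖⁻¹ ≤ ENNReal.ofReal (2 * π * (r + ‖x‖)) := by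
  have hpre : (fun y : ℂ => x - y) ⁻¹' ball x r = ball 0 r := by
    ext y; simp
  rw [← hpre, (Measure.measurePreserving_sub_left volume x).setLIntegral_comp_preimage_emb
    (MeasurableEquiv.subLeft x).measurableEmbedding (fun z => ENNReal.ofReal ‖z‖⁻¹),
    ← lintegral_ball_inv_norm]
  refine lintegral_mono_set fun z hz => ?_
  rw [mem_ball, dist_eq_norm] at hz
  rw [mem_ball_zero_iff]
  linarith [norm_le_norm_add_norm_sub' z x]

-- `(x - y)^⊥` is `I * (x - y)`.
noncomputable def biotSavart (x y : ℂ) : ℂ :=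
  1 / (2 * (π : ℂ)) * (Complex.I * (x - y)) / ((‖x - y‖ ^ 2 : ℝ) : ℂ)

noncomputable def symmetrizedBiotSavart (m : ℕ) (x y : ℂ) : ℂ :=
  1 / (m : ℂ) * ∑ i ∈ Finset.range m,
    biotSavart x (Complex.exp (2 * π * Complex.I * (i + 1) / m) * y)

theorem norm_biotSavart (x y : ℂ) : ‖biotSavart x y‖ = (2 * π)⁻¹ * ‖x - y‖⁻¹ := by
  rcases eq_or_ne ‖x - y‖ 0 with h | h
  · simp [biotSavart, h]
  · simp [biotSavart, abs_of_pos pi_pos]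
    field_simp

theorem measurable_biotSavart (x : ℂ) : Measurable (biotSavart x) := by
  unfold biotSavart; fun_prop

theorem lintegral_ball_enorm_biotSavart_le {c : ℂ} (hc : ‖c‖ = 1) (x : ℂ) (r : ℝ) :
    ∫⁻ y in ball (0 : ℂ) r, ‖biotSavart x (c * y)‖ₑ ≤ ENNReal.ofReal (r + ‖x‖) := by
  have hc0 : c ≠ 0 := norm_ne_zero_iff.1 (by rw [hc]; exact one_ne_zero)
  have hrot : ∀ y, ‖x - c * y‖ = ‖c⁻¹ * x - y‖ := fun y => by
    rw [← one_mul ‖c⁻¹ * x - y‖, ← hc, ← norm_mul, mul_sub, mul_inv_cancel_left₀ hc0]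
  calc ∫⁻ y in ball (0 : ℂ) r, ‖biotSavart x (c * y)‖ₑ
      = ENNReal.ofReal (2 * π)⁻¹ * ∫⁻ y in ball (0 : ℂ) r, ENNReal.ofReal ‖c⁻¹ * x - y‖⁻¹ := by
        rw [← lintegral_const_mul' _ _ ENNReal.ofReal_ne_top]
        refine lintegral_congr fun y => ?_
        rw [← ofReal_norm, norm_biotSavart, hrot, ENNReal.ofReal_mul (by positivity)]
    _ ≤ ENNReal.ofReal (2 * π)⁻¹ * ENNReal.ofReal (2 * π * (r + ‖x‖)) := by
        grw [lintegral_ball_inv_norm_sub_le]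
        rw [norm_mul, norm_inv, hc, inv_one, one_mul]
    _ = ENNReal.ofReal (r + ‖x‖) := by
        rw [← ENNReal.ofReal_mul (by positivity), inv_mul_cancel_left₀ (by positivity)]

theorem lintegral_ball_enorm_symmetrizedBiotSavart_le {m : ℕ} (hm : m ≠ 0) (x : ℂ) (r : ℝ) :
    ∫⁻ y in ball (0 : ℂ) r, ‖symmetrizedBiotSavart m x y‖ₑ ≤ ENNReal.ofReal (r + ‖x‖) := by
  have hroot : ∀ i : ℕ, ‖Complex.exp (2 * π * Complex.I * (i + 1) / m)‖ = 1 := fun i => by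
    rw [Complex.norm_exp]
    simp
  calc ∫⁻ y in ball (0 : ℂ) r, ‖symmetrizedBiotSavart m x y‖ₑ
      ≤ ∫⁻ y in ball (0 : ℂ) r, (m : ℝ≥0∞)⁻¹ * ∑ i ∈ Finset.range m,
          ‖biotSavart x (Complex.exp (2 * π * Complex.I * (i + 1) / m) * y)‖ₑ := by
        refine lintegral_mono fun y => ?_
        rw [symmetrizedBiotSavart, enorm_mul]
        gcongr
        · rw [one_div, enorm_inv (by exact_mod_cast hm), ← ofReal_norm, Complex.norm_natCast,
            ENNReal.ofReal_natCast]
        · exact enorm_sum_le _ _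
    _ = (m : ℝ≥0∞)⁻¹ * ∑ i ∈ Finset.range m, ∫⁻ y in ball (0 : ℂ) r,
          ‖biotSavart x (Complex.exp (2 * π * Complex.I * (i + 1) / m) * y)‖ₑ := by
        rw [lintegral_const_mul' _ _ (by simpa using hm), lintegral_finsetSum]
        intro i _
        exact ((measurable_biotSavart x).comp (measurable_const_mul _)).enorm
    _ ≤ (m : ℝ≥0∞)⁻¹ * ∑ _i ∈ Finset.range m, ENNReal.ofReal (r + ‖x‖) := by
        gcongr with i
        exact lintegral_ball_enorm_biotSavart_le (hroot i) x r
    _ = ENNReal.ofReal (r + ‖x‖) := by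
        rw [Finset.sum_const, Finset.card_range, nsmul_eq_mul,
          ENNReal.inv_mul_cancel_left (by simpa using hm) (by simp)]

theorem setLIntegral_le_of_le_div_norm_cube {f : ℂ → ℝ≥0∞} {s : Set ℂ} {R C : ℝ} (hR : 0 < R)
    (hs : s ⊆ (ball 0 R)ᶜ) (hf : ∀ y ∈ s, f y ≤ ENNReal.ofReal (C / ‖y‖ ^ 3)) :
    ∫⁻ y in s, f y ≤ ENNReal.ofReal (2 * π * C / R) := by
  calc ∫⁻ y in s, f y ≤ ∫⁻ y in s, ENNReal.ofReal C * ENNReal.ofReal (‖y‖ ^ 3)⁻¹ :=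
        setLIntegral_mono (by fun_prop) fun y hy => (hf y hy).trans_eq <| by
          rw [div_eq_mul_inv, ENNReal.ofReal_mul' (by positivity)]
    _ ≤ ENNReal.ofReal C * ∫⁻ y in (ball (0 : ℂ) R)ᶜ, ENNReal.ofReal (‖y‖ ^ 3)⁻¹ := by
        rw [lintegral_const_mul' _ _ ENNReal.ofReal_ne_top]
        exact mul_le_mul_right (lintegral_mono_set hs) _
    _ = ENNReal.ofReal (2 * π * C / R) := by
        rw [lintegral_compl_ball_inv_norm_cube hR, ← ENNReal.ofReal_mul' (by positivity)]
        ring_nf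

theorem pow_pred_div_pow_le_sq_div_cube {a b : ℝ} (ha : 0 ≤ a) (hab : a ≤ b) {m : ℕ}
    (hm : 3 ≤ m) :
    a ^ (m - 1) / b ^ m ≤ a ^ 2 / b ^ 3 := by
  obtain ⟨k, rfl⟩ := Nat.exists_eq_add_of_le' hm
  have hb : 0 ≤ b := ha.trans hab
  rcases hb.eq_or_lt with rfl | hb
  · simp
  rw [show k + 3 - 1 = 2 + k by omega, div_le_div_iff₀ (by positivity) (by positivity), pow_add,
    pow_add]
  calc a ^ 2 * a ^ k * b ^ 3 ≤ a ^ 2 * b ^ k * b ^ 3 := by gcongr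
    _ = a ^ 2 * (b ^ k * b ^ 3) := by ring

theorem norm_integral_mul_le_of_near_far {K : ℂ → ℂ} {ω : ℂ → ℝ} {a C W ε δ : ℝ}
    (ha : 0 < a) (hδ : 2 * a ≤ δ) (hC : 0 ≤ C) (hε : 0 ≤ ε)
    (hnear : ∫⁻ y in ball 0 (2 * a), ‖K y‖ₑ ≤ ENNReal.ofReal (3 * a))
    (hfar : ∀ y, 2 * a ≤ ‖y‖ → ‖K y‖ ≤ C * a ^ 2 / ‖y‖ ^ 3)
    (hbdd : ∀ y, |ω y| ≤ W) (hsmall : ∀ y, y ≠ 0 → ‖y‖ < δ → |ω y| ≤ ε) :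
    ‖∫ y, K y * ω y‖ ≤ (3 + π * C) * ε * a + 2 * π * C * W * a ^ 2 / δ := by
  have hW : 0 ≤ W := (abs_nonneg _).trans (hbdd 0)
  have hδ0 : 0 < δ := by linarith
  have henorm : ∀ y, ‖K y * ω y‖ₑ = ENNReal.ofReal (‖K y‖ * |ω y|) := fun y => by
    rw [← ofReal_norm, norm_mul, Complex.norm_real, Real.norm_eq_abs]
  have hinner : ∫⁻ y in ball 0 (2 * a), ‖K y * ω y‖ₑ ≤ ENNReal.ofReal (3 * ε * a) := by
    have hne : ∀ᵐ y ∂volume.restrict (ball (0 : ℂ) (2 * a)), y ≠ 0 :=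
      ae_restrict_of_ae (compl_mem_ae_iff.2 (measure_singleton 0))
    calc ∫⁻ y in ball 0 (2 * a), ‖K y * ω y‖ₑ
        ≤ ∫⁻ y in ball 0 (2 * a), ‖K y‖ₑ * ENNReal.ofReal ε := by
          refine lintegral_mono_ae ?_
          filter_upwards [ae_restrict_mem measurableSet_ball, hne] with y hyB hy0
          rw [henorm, ← ofReal_norm, ← ENNReal.ofReal_mul (norm_nonneg _)]
          refine ENNReal.ofReal_le_ofReal (mul_le_mul_of_nonneg_left ?_ (norm_nonneg _))
          exact hsmall y hy0 ((mem_ball_zero_iff.1 hyB).trans_le hδ)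
      _ = (∫⁻ y in ball 0 (2 * a), ‖K y‖ₑ) * ENNReal.ofReal ε :=
          lintegral_mul_const' _ _ ENNReal.ofReal_ne_top
      _ ≤ ENNReal.ofReal (3 * a) * ENNReal.ofReal ε := by grw [hnear]
      _ = ENNReal.ofReal (3 * ε * a) := by
          rw [← ENNReal.ofReal_mul (by positivity)]
          ring_nf
  have hfar' : ∀ y, 2 * a ≤ ‖y‖ → ∀ M, |ω y| ≤ M →
      ‖K y * ω y‖ₑ ≤ ENNReal.ofReal (C * a ^ 2 * M / ‖y‖ ^ 3) := fun y hy M hM => by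
    rw [henorm]
    refine ENNReal.ofReal_le_ofReal ?_
    calc ‖K y‖ * |ω y| ≤ C * a ^ 2 / ‖y‖ ^ 3 * M :=
          mul_le_mul (hfar y hy) hM (abs_nonneg _) (by positivity)
      _ = C * a ^ 2 * M / ‖y‖ ^ 3 := by ring
  have hmiddle : ∫⁻ y in ball 0 δ ∩ (ball 0 (2 * a))ᶜ, ‖K y * ω y‖ₑ ≤
      ENNReal.ofReal (π * C * ε * a) := by
    refine (setLIntegral_le_of_le_div_norm_cube (R := 2 * a) (C := C * a ^ 2 * ε) (by positivity)
      inter_subset_right fun y hy => ?_).trans_eq ?_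
    · obtain ⟨hyδ, hyB⟩ := hy
      have hy : 2 * a ≤ ‖y‖ := by simpa using hyB
      refine hfar' y hy ε (hsmall y ?_ (mem_ball_zero_iff.1 hyδ))
      intro hy0
      rw [hy0, norm_zero] at hy
      linarith
    · congr 1
      field_simp
  have htail : ∫⁻ y in (ball 0 δ)ᶜ, ‖K y * ω y‖ₑ ≤
      ENNReal.ofReal (2 * π * C * W * a ^ 2 / δ) := by
    refine (setLIntegral_le_of_le_div_norm_cube (R := δ) (C := C * a ^ 2 * W) hδ0 subset_rfl
      fun y hy => ?_).trans_eq ?_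
    · exact hfar' y (hδ.trans (by simpa using hy)) W (hbdd y)
    · ring_nf
  have hsplit : (ball (0 : ℂ) (2 * a))ᶜ ⊆ (ball 0 δ ∩ (ball 0 (2 * a))ᶜ) ∪ (ball 0 δ)ᶜ :=
    fun y hy => by
      by_cases h : y ∈ ball (0 : ℂ) δ
      exacts [Or.inl ⟨h, hy⟩, Or.inr h]
  have htotal : ‖∫ y, K y * ω y‖ₑ ≤ ENNReal.ofReal
      ((3 + π * C) * ε * a + 2 * π * C * W * a ^ 2 / δ) := calc
    ‖∫ y, K y * ω y‖ₑ ≤ ∫⁻ y, ‖K y * ω y‖ₑ := enorm_integral_le_lintegral_enorm _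
    _ = (∫⁻ y in ball 0 (2 * a), ‖K y * ω y‖ₑ) + ∫⁻ y in (ball 0 (2 * a))ᶜ, ‖K y * ω y‖ₑ :=
        (lintegral_add_compl _ measurableSet_ball).symm
    _ ≤ ENNReal.ofReal (3 * ε * a) +
          (ENNReal.ofReal (π * C * ε * a) + ENNReal.ofReal (2 * π * C * W * a ^ 2 / δ)) := by
        refine add_le_add hinner ((lintegral_mono_set hsplit).trans ?_)
        exact (lintegral_union_le _ _ _).trans (add_le_add hmiddle htail)
    _ = _ := by
        rw [← ENNReal.ofReal_add (by positivity) (by positivity),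
          ← ENNReal.ofReal_add (by positivity) (by positivity)]
        ring_nf
  rw [← ofReal_norm] at htotal
  exact (ENNReal.ofReal_le_ofReal_iff (by positivity)).1 htotal

theorem norm_integral_symmetrizedBiotSavart_mul_le {m : ℕ} (hm : 3 ≤ m) {ω : ℂ → ℝ}
    {C W ε δ : ℝ} {x : ℂ} (hx : 0 < ‖x‖) (hxδ : 2 * ‖x‖ ≤ δ) (hC : 0 ≤ C) (hε : 0 ≤ ε)
    (hdecay : ∀ y, 2 * ‖x‖ ≤ ‖y‖ → ‖symmetrizedBiotSavart m x y‖ ≤ C * ‖x‖ ^ (m - 1) / ‖y‖ ^ m)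
    (hbdd : ∀ y, |ω y| ≤ W) (hsmall : ∀ y, y ≠ 0 → ‖y‖ < δ → |ω y| ≤ ε) :
    ‖∫ y, symmetrizedBiotSavart m x y * ω y‖ ≤
      (3 + π * C) * ε * ‖x‖ + 2 * π * C * W * ‖x‖ ^ 2 / δ := by
  refine norm_integral_mul_le_of_near_far hx hxδ hC hε ?_ (fun y hy => ?_) hbdd hsmall
  · exact (lintegral_ball_enorm_symmetrizedBiotSavart_le (by omega) x _).trans_eq (by ring_nf)
  · refine (hdecay y hy).trans ?_
    simp only [mul_div_assoc]
    exact mul_le_mul_of_nonneg_left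
      (pow_pred_div_pow_le_sq_div_cube hx.le (by linarith [norm_nonneg x]) hm) hC

theorem stmt16_general (m : ℕ) (hm : 3 ≤ m) (Cm W : ℝ)
    (ω : ℂ → ℝ) (hbdd : ∀ y, |ω y| ≤ W)
    (hlim : Tendsto ω (nhdsWithin 0 {0}ᶜ) (nhds 0))
    (Km : ℂ → ℂ → ℂ)
    (hKm : ∀ x y, Km x y = (1 / (m : ℂ)) * ∑ i ∈ Finset.range m,
      (1 / (2 * (π : ℂ))) *
        (Complex.I * (x - Complex.exp (2 * π * Complex.I * (i + 1) / m) * y)) /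
        ((‖x - Complex.exp (2 * π * Complex.I * (i + 1) / m) * y‖ ^ 2 : ℝ) : ℂ))
    (hdecay : ∀ x y : ℂ, 2 * ‖x‖ ≤ ‖y‖ →
      ‖Km x y‖ ≤ Cm * (‖x‖) ^ (m - 1) / (‖y‖) ^ m)
    (u : ℂ → ℂ)
    (hu : ∀ x, u x = ∫ y, Km x y * (ω y : ℂ)) :
    Tendsto (fun x => ‖u x‖ / ‖x‖)
      (nhdsWithin 0 {0}ᶜ) (nhds 0) := by
  obtain rfl : Km = symmetrizedBiotSavart m := funext₂ hKm
  have hCm : 0 ≤ Cm := by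
    have h : 0 ≤ Cm / 2 ^ m := by simpa using (norm_nonneg _).trans (hdecay 1 2 (by norm_num))
    simpa using mul_nonneg h (pow_nonneg zero_le_two m)
  have hnorm : Tendsto (fun x : ℂ => ‖x‖) (𝓝[≠] 0) (𝓝 0) :=
    tendsto_norm_zero.mono_left nhdsWithin_le_nhds
  refine (Asymptotics.IsLittleO.of_bound fun c hc => ?_).tendsto_div_nhds_zero
  obtain ⟨δ, hδ, hsmall⟩ :=
    Metric.tendsto_nhdsWithin_nhds.1 hlim (c / (2 * (3 + π * Cm))) (by positivity)
  have htail : ∀ᶠ x in 𝓝[≠] (0 : ℂ), 2 * π * Cm * W / δ * ‖x‖ ≤ c / 2 := by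
    have h : Tendsto (fun x : ℂ => 2 * π * Cm * W / δ * ‖x‖) (𝓝[≠] 0) (𝓝 0) := by
      simpa using hnorm.const_mul (2 * π * Cm * W / δ)
    exact h.eventually (ge_mem_nhds (half_pos hc))
  filter_upwards [self_mem_nhdsWithin, hnorm.eventually (ge_mem_nhds (half_pos hδ)), htail]
    with x hx0 hxδ hxW
  rw [norm_norm, norm_norm, hu]
  calc _ ≤ (3 + π * Cm) * (c / (2 * (3 + π * Cm))) * ‖x‖ + 2 * π * Cm * W * ‖x‖ ^ 2 / δ :=
        norm_integral_symmetrizedBiotSavart_mul_le hm (norm_pos_iff.2 hx0) (by linarith) hCm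
          (by positivity) (hdecay x) hbdd fun y hy0 hyδ => by
            simpa [Real.dist_eq] using (hsmall hy0 (by simpa using hyδ)).le
    _ = c / 2 * ‖x‖ + 2 * π * Cm * W / δ * ‖x‖ * ‖x‖ := by field_simp
    _ ≤ c / 2 * ‖x‖ + c / 2 * ‖x‖ := by gcongr
    _ = c * ‖x‖ := by ring

theorem stmt16 (m : ℕ) (hm : 3 ≤ m) (Cm W : ℝ)
    (ω : ℂ → ℝ) (hbdd : ∀ y, |ω y| ≤ W)
    (hmeas : Measurable ω)
    (hsym : ∀ y, ω (Complex.exp (2 * π * Complex.I / m) * y) = ω y)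
    (hlim : Tendsto ω (nhdsWithin 0 {0}ᶜ) (nhds 0))
    (Km : ℂ → ℂ → ℂ)
    (hKm : ∀ x y, Km x y = (1 / (m : ℂ)) * ∑ i ∈ Finset.range m,
      (1 / (2 * (π : ℂ))) *
        (Complex.I * (x - Complex.exp (2 * π * Complex.I * (i + 1) / m) * y)) /
        ((‖x - Complex.exp (2 * π * Complex.I * (i + 1) / m) * y‖ ^ 2 : ℝ) : ℂ))
    (hdecay : ∀ x y : ℂ, 2 * ‖x‖ ≤ ‖y‖ →
      ‖Km x y‖ ≤ Cm * (‖x‖) ^ (m - 1) / (‖y‖) ^ m)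
    (u : ℂ → ℂ)
    (hu : ∀ x, u x = ∫ y, Km x y * (ω y : ℂ)) :
    Tendsto (fun x => ‖u x‖ / ‖x‖)
      (nhdsWithin 0 {0}ᶜ) (nhds 0) :=
  stmt16_general m hm Cm W ω hbdd hlim Km hKm hdecay u hu
end

section
/- Let u : ℝ² × [0,∞) → ℝ² be a time-dependent Lipschitz velocity field of the form u(x,t) = x^⊥ + h(x,t) with |h(x,t)| ≤ M|x|² and |u(x,t)| ≤ 1 for all (x,t), and let Φ be its flow map with Φ(0,t)=0. If sup_{x,t}|∇Φ(x,t)| ≤ K, then for x with |x| ≤ 1/(100MK), the polar-angle function θ(x,t) of Φ(x,t) satisfies |dθ/dt − 1| ≤ 1/100, and hence −2π + 0.99t ≤ θ(x,t) ≤ 1.01t + 2π for all t ≥ 0; while for |x| ≥ 100K, θ(x,t) ≤ 0.01t + 2π. -/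
open Real Set Filter Topology

/-! The angular speed is `θ' = Im (u(Φ)/Φ)`. Near the origin
`u(Φ)/Φ = i + h(Φ)/Φ` with `|h(Φ)/Φ| ≤ M|Φ| ≤ MK|x| ≤ 1/100`, while far out `|u(Φ)/Φ| ≤ 1/|Φ| ≤ K/|x|
≤ 1/100`; the bounds on `θ` follow by the mean value inequality, using `θ(x,0) ∈ [0, 2π)`. -/

theorem abs_sub_sub_mul_le_of_abs_deriv_sub_le {f f' : ℝ → ℝ} {a b c ε : ℝ} (hab : a ≤ b)
    (hf : ∀ s ∈ Icc a b, HasDerivAt f (f' s) s) (hf' : ∀ s ∈ Ico a b, |f' s - c| ≤ ε) :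
    |f b - f a - c * (b - a)| ≤ ε * (b - a) := by
  have hg : ∀ s ∈ Icc a b, HasDerivWithinAt (fun s => f s - c * s) (f' s - c) (Icc a b) s :=
    fun s hs => ((hf s hs).sub ((hasDerivAt_id s).const_mul c)).hasDerivWithinAt.congr_deriv
      (by simp)
  have := norm_image_sub_le_of_norm_deriv_le_segment' hg hf' b (right_mem_Icc.2 hab)
  rw [Real.norm_eq_abs] at this
  convert this using 2
  ring

theorem Complex.abs_im_div_le_norm_div (w z : ℂ) : |(w / z).im| ≤ ‖w‖ / ‖z‖ :=
  (abs_im_le_norm _).trans_eq (norm_div w z)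

theorem Complex.abs_im_div_le_one_div {w z : ℂ} {R : ℝ} (hR : 0 < R) (hw : ‖w‖ ≤ 1)
    (hz : R ≤ ‖z‖) : |(w / z).im| ≤ 1 / R :=
  (abs_im_div_le_norm_div w z).trans (div_le_div₀ zero_le_one hw hR hz)

theorem Complex.abs_im_I_mul_add_div_sub_one_le {M : ℝ} {z w : ℂ} (hz : z ≠ 0)
    (hw : ‖w‖ ≤ M * ‖z‖ ^ 2) : |((I * z + w) / z).im - 1| ≤ M * ‖z‖ := by
  have hz' := norm_pos_iff.2 hz
  have : (I * z + w) / z = I + w / z := by field_simp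
  rw [this, add_im, I_im, add_sub_cancel_left]
  calc _ ≤ ‖w‖ / ‖z‖ := abs_im_div_le_norm_div w z
    _ ≤ M * ‖z‖ := by
        rw [div_le_iff₀ hz']
        linarith

theorem stmt17_general (M K : ℝ) (hM : 0 < M) (hK : 1 ≤ K)
    (u h : ℂ → ℝ → ℂ)
    (hu : ∀ x t, u x t = Complex.I * x + h x t)
    (hh : ∀ x t, ‖h x t‖ ≤ M * (‖x‖) ^ 2)
    (hub : ∀ x t, ‖u x t‖ ≤ 1)
    (Φ : ℂ → ℝ → ℂ)
    (hbilip : ∀ x t, ‖x‖ / K ≤ ‖Φ x t‖ ∧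
      ‖Φ x t‖ ≤ K * ‖x‖)
    (θ θ' : ℂ → ℝ → ℝ)
    (hθd : ∀ x t, x ≠ 0 → HasDerivAt (θ x) (θ' x t) t)
    (hθ'eq : ∀ x t, x ≠ 0 → θ' x t = (u (Φ x t) t / Φ x t).im)
    (hθ0 : ∀ x, x ≠ 0 → θ x 0 ∈ Ico 0 (2 * π)) :
    (∀ x, x ≠ 0 → ‖x‖ ≤ 1 / (100 * M * K) → ∀ t ≥ (0:ℝ),
        |θ' x t - 1| ≤ 1 / 100 ∧
        -(2 * π) + 0.99 * t ≤ θ x t ∧ θ x t ≤ 1.01 * t + 2 * π) ∧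
    (∀ x, x ≠ 0 → 100 * K ≤ ‖x‖ → ∀ t ≥ (0:ℝ),
        θ x t ≤ 0.01 * t + 2 * π) := by
  have hK0 : 0 < K := by linarith
  have hΦ : ∀ x, x ≠ 0 → ∀ s, Φ x s ≠ 0 := fun x hx s => norm_pos_iff.1 <|
    (div_pos (norm_pos_iff.2 hx) hK0).trans_le (hbilip x s).1
  constructor
  · intro x hx hxs t ht
    have hMx : M * (K * ‖x‖) ≤ 1 / 100 := by
      rw [le_div_iff₀ (by positivity)] at hxs
      linarith
    have hθ' : ∀ s, |θ' x s - 1| ≤ 1 / 100 := fun s => by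
      rw [hθ'eq x s hx, hu]
      exact (Complex.abs_im_I_mul_add_div_sub_one_le (hΦ x hx s) (hh _ s)).trans
        ((mul_le_mul_of_nonneg_left (hbilip x s).2 hM.le).trans hMx)
    have hmvt := abs_sub_sub_mul_le_of_abs_deriv_sub_le ht (fun s _ => hθd x s hx)
      (fun s _ => hθ' s)
    have h0 := hθ0 x hx
    refine ⟨hθ' t, ?_, ?_⟩ <;> linarith [abs_le.1 hmvt, h0.1, h0.2]
  · intro x hx hxs t ht
    have hθ' : ∀ s, |θ' x s - 0| ≤ 1 / 100 := fun s => by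
      rw [sub_zero, hθ'eq x s hx]
      exact Complex.abs_im_div_le_one_div (by norm_num) (hub _ s)
        (((le_div_iff₀ hK0).2 (by linarith)).trans (hbilip x s).1)
    have hmvt := abs_sub_sub_mul_le_of_abs_deriv_sub_le ht (fun s _ => hθd x s hx)
      (fun s _ => hθ' s)
    linarith [abs_le.1 hmvt, (hθ0 x hx).2]

theorem stmt17 (M K : ℝ) (hM : 0 < M) (hK : 1 ≤ K)
    (u h : ℂ → ℝ → ℂ)
    (hu : ∀ x t, u x t = Complex.I * x + h x t)
    (hh : ∀ x t, ‖h x t‖ ≤ M * (‖x‖) ^ 2)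
    (hub : ∀ x t, ‖u x t‖ ≤ 1)
    (Φ : ℂ → ℝ → ℂ)
    (hflow : ∀ x t, HasDerivAt (Φ x) (u (Φ x t) t) t)
    (hΦ0 : ∀ x, Φ x 0 = x)
    (horigin : ∀ t, Φ 0 t = 0)
    (hbilip : ∀ x t, ‖x‖ / K ≤ ‖Φ x t‖ ∧
      ‖Φ x t‖ ≤ K * ‖x‖)
    (θ θ' : ℂ → ℝ → ℝ)
    (hθ : ∀ x t, x ≠ 0 →
      Φ x t = (‖Φ x t‖ : ℂ) * Complex.exp (θ x t * Complex.I))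
    (hθd : ∀ x t, x ≠ 0 → HasDerivAt (θ x) (θ' x t) t)
    (hθ'eq : ∀ x t, x ≠ 0 → θ' x t = (u (Φ x t) t / Φ x t).im)
    (hθ0 : ∀ x, x ≠ 0 → θ x 0 ∈ Ico 0 (2 * π)) :
    (∀ x, x ≠ 0 → ‖x‖ ≤ 1 / (100 * M * K) → ∀ t ≥ (0:ℝ),
        |θ' x t - 1| ≤ 1 / 100 ∧
        -(2 * π) + 0.99 * t ≤ θ x t ∧ θ x t ≤ 1.01 * t + 2 * π) ∧
    (∀ x, x ≠ 0 → 100 * K ≤ ‖x‖ → ∀ t ≥ (0:ℝ),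
        θ x t ≤ 0.01 * t + 2 * π) :=
  stmt17_general M K hM hK u h hu hh hub Φ hbilip θ θ' hθd hθ'eq hθ0
end
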